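/- Let (x_n) be a sequence in DL_d(q) whose associated functions z ↦ d(x_n,z) − d(x_n,id) converge pointwise to a horofunction h. Then for each i ∈ {1,…,d}, the limit lim_n m_i(x_n) exists in ℤ_{≥0} ∪ {∞}. -/

import Mathlib

open Finset

/-- A vertex of the oriented (q+1)-valent tree `T` underlying Diestel–Leader graphs:
descend `m` edges from the basepoint `o` along its ancestor ray (whose edges all
carry the label `0`), then ascend along the edge labels listed in `w`.
The normalization condition (if `m ≠ 0`, the first label of `w` is not `0`)
makes this representation unique. -/
structure TreeVertex (q : ℕ) where
  m : ℕ
  w : List (Fin q)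
  norm : ∀ a t, m ≠ 0 → w = a :: t → (a : ℕ) ≠ 0

namespace TreeVertex

variable {q : ℕ}

/-- the basepoint `o` of the tree -/
def o (q : ℕ) : TreeVertex q := ⟨0, [], fun _ _ h _ => absurd rfl h⟩

/-- `l v = d(v, o ⋏ v)` -/
def l (v : TreeVertex q) : ℕ := v.w.length

/-- the height function `h = l - m` -/
def h (v : TreeVertex q) : ℤ := (v.l : ℤ) - (v.m : ℤ)

/-- length of the longest common prefix of two lists -/
def cpl : List (Fin q) → List (Fin q) → ℕ
  | a :: s, b :: t => if a = b then cpl s t + 1 else 0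
  | _, _ => 0

/-- `mPair x y = d(x, x ⋏ y)`, the distance from `x` to the greatest common
ancestor of `x` and `y`. -/
def mPair (x y : TreeVertex q) : ℕ :=
  if x.m < y.m then x.l + (y.m - x.m)
  else if y.m < x.m then x.l
  else x.l - cpl x.w y.w

/-- the graph distance in the tree -/
def dist (x y : TreeVertex q) : ℕ := mPair x y + mPair y x

end TreeVertex

/-- The Diestel–Leader graph `DL_d(q)`: `d`-tuples of tree vertices whose heights
sum to `0`. -/
structure DL (d q : ℕ) where
  t : Fin d → TreeVertex q
  hsum : ∑ i, (t i).h = 0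

namespace DL

variable {d q : ℕ}

/-- the basepoint `id` of `DL_d(q)` -/
def id0 (d q : ℕ) : DL d q :=
  ⟨fun _ => TreeVertex.o q, by simp [TreeVertex.h, TreeVertex.o, TreeVertex.l]⟩

/-- the pairwise coordinate `m_i(x,y) = d_i(p_i x, p_i x ⋏ p_i y)` -/
def mm (x y : DL d q) (i : Fin d) : ℕ := TreeVertex.mPair (x.t i) (y.t i)

/-- the pairwise coordinate `l_i(x,y) = d_i(p_i y, p_i x ⋏ p_i y)` -/
def ll (x y : DL d q) (i : Fin d) : ℕ := TreeVertex.mPair (y.t i) (x.t i)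

/-- the coordinate `m_i(x)` -/
def mc (x : DL d q) (i : Fin d) : ℕ := (x.t i).m

/-- the coordinate `l_i(x)` -/
def lc (x : DL d q) (i : Fin d) : ℕ := (x.t i).l

/-- the height coordinate `h_i(x) = l_i(x) - m_i(x)` -/
def hc (x : DL d q) (i : Fin d) : ℤ := (x.t i).h

/-- The Stein–Taback quantity `f_{σ,i}` (here `i` is 1-based, `2 ≤ i ≤ d`):
`f_{σ,i} = m_{σ(1)} + ⋯ + m_{σ(i)} + l_{σ(i)} + ⋯ + l_{σ(d)}` for `2 ≤ i ≤ d-1`,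
and `f_{σ,d} = 2m_{σ(1)} + m_{σ(2)} + ⋯ + m_{σ(d)} + l_{σ(d)}`. -/
def fST {d : ℕ} (m l : Fin d → ℕ) (σ : Equiv.Perm (Fin d)) (i : ℕ) : ℕ :=
  if i = d then
    (∑ j, m (σ j)) + (∑ j ∈ univ.filter fun j : Fin d => (j : ℕ) = 0, m (σ j))
      + (∑ j ∈ univ.filter fun j : Fin d => (j : ℕ) = d - 1, l (σ j))
  else
    (∑ j ∈ univ.filter fun j : Fin d => (j : ℕ) + 1 ≤ i, m (σ j))
      + (∑ j ∈ univ.filter fun j : Fin d => i ≤ (j : ℕ) + 1, l (σ j))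

/-- The distance on `DL_d(q)`, via the Stein–Taback formula
`d(x,y) = min_{σ ∈ Σ_d} max_{2 ≤ i ≤ d} f_{σ,i}(x,y)`. -/
noncomputable def dist (x y : DL d q) : ℕ :=
  ⨅ σ : Equiv.Perm (Fin d), ⨆ i ∈ Finset.Icc 2 d, fST (mm x y) (ll x y) σ i

end DL

open Filter
section Aux

lemma ciSup_finset_eq_sup (s : Finset ℕ) (f : ℕ → ℕ) : (⨆ i ∈ s, f i) = s.sup f := by
  apply le_antisymm
  · exact ciSup_le' fun i => ciSup_le' fun hi => Finset.le_sup hi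
  · refine Finset.sup_le fun i hi => ?_
    have hbdd : BddAbove (Set.range fun i => ⨆ _ : i ∈ s, f i) := by
      refine ⟨s.sup f, ?_⟩
      rintro _ ⟨j, rfl⟩
      exact ciSup_le' fun hj => Finset.le_sup hj
    calc f i = ⨆ _ : i ∈ s, f i := (ciSup_pos (f := fun _ => f i) hi).symm
      _ ≤ ⨆ i ∈ s, f i := le_ciSup hbdd i

lemma fST_mono {d : ℕ} {m l m' l' : Fin d → ℕ} (hm : ∀ j, m j ≤ m' j)
    (hl : ∀ j, l j ≤ l' j) (σ : Equiv.Perm (Fin d)) (i : ℕ) :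
    DL.fST m l σ i ≤ DL.fST m' l' σ i := by
  unfold DL.fST
  split
  · exact add_le_add (add_le_add (Finset.sum_le_sum fun j _ => hm _)
      (Finset.sum_le_sum fun j _ => hm _)) (Finset.sum_le_sum fun j _ => hl _)
  · exact add_le_add (Finset.sum_le_sum fun j _ => hm _) (Finset.sum_le_sum fun j _ => hl _)

lemma fST_succ_le {d : ℕ} {m l m' l' : Fin d → ℕ} (hm : ∀ j, m j ≤ m' j)
    (hl : ∀ j, l j ≤ l' j) {i₀ : Fin d} (hmi : m i₀ + 1 ≤ m' i₀) (hli : l i₀ + 1 ≤ l' i₀)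
    (σ : Equiv.Perm (Fin d)) (i : ℕ) :
    DL.fST m l σ i + 1 ≤ DL.fST m' l' σ i := by
  have hj₀ : σ (σ.symm i₀) = i₀ := σ.apply_symm_apply i₀
  unfold DL.fST
  split
  · have h1 : ∑ j, m (σ j) < ∑ j, m' (σ j) :=
      Finset.sum_lt_sum (fun j _ => hm _) ⟨σ.symm i₀, Finset.mem_univ _, by rw [hj₀]; omega⟩
    have h2 : (∑ j ∈ univ.filter fun j : Fin d => (j : ℕ) = 0, m (σ j))
        ≤ ∑ j ∈ univ.filter fun j : Fin d => (j : ℕ) = 0, m' (σ j) :=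
      Finset.sum_le_sum fun j _ => hm _
    have h3 : (∑ j ∈ univ.filter fun j : Fin d => (j : ℕ) = d - 1, l (σ j))
        ≤ ∑ j ∈ univ.filter fun j : Fin d => (j : ℕ) = d - 1, l' (σ j) :=
      Finset.sum_le_sum fun j _ => hl _
    omega
  · by_cases hc : ((σ.symm i₀ : Fin d) : ℕ) + 1 ≤ i
    · have h1 : (∑ j ∈ univ.filter fun j : Fin d => (j : ℕ) + 1 ≤ i, m (σ j))
          < ∑ j ∈ univ.filter fun j : Fin d => (j : ℕ) + 1 ≤ i, m' (σ j) :=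
        Finset.sum_lt_sum (fun j _ => hm _)
          ⟨σ.symm i₀, Finset.mem_filter.mpr ⟨Finset.mem_univ _, hc⟩, by rw [hj₀]; omega⟩
      have h2 : (∑ j ∈ univ.filter fun j : Fin d => i ≤ (j : ℕ) + 1, l (σ j))
          ≤ ∑ j ∈ univ.filter fun j : Fin d => i ≤ (j : ℕ) + 1, l' (σ j) :=
        Finset.sum_le_sum fun j _ => hl _
      omega
    · have hc' : i ≤ ((σ.symm i₀ : Fin d) : ℕ) + 1 := by omega
      have h1 : (∑ j ∈ univ.filter fun j : Fin d => (j : ℕ) + 1 ≤ i, m (σ j))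
          ≤ ∑ j ∈ univ.filter fun j : Fin d => (j : ℕ) + 1 ≤ i, m' (σ j) :=
        Finset.sum_le_sum fun j _ => hm _
      have h2 : (∑ j ∈ univ.filter fun j : Fin d => i ≤ (j : ℕ) + 1, l (σ j))
          < ∑ j ∈ univ.filter fun j : Fin d => i ≤ (j : ℕ) + 1, l' (σ j) :=
        Finset.sum_lt_sum (fun j _ => hl _)
          ⟨σ.symm i₀, Finset.mem_filter.mpr ⟨Finset.mem_univ _, hc'⟩, by rw [hj₀]; omega⟩
      omega

lemma DL.dist_eq_inf_sup {d q : ℕ} (x y : DL d q) :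
    DL.dist x y
      = ⨅ σ : Equiv.Perm (Fin d), (Finset.Icc 2 d).sup (DL.fST (DL.mm x y) (DL.ll x y) σ) := by
  unfold DL.dist
  congr 1
  funext σ
  exact ciSup_finset_eq_sup _ _

lemma DL.dist_le_of_coord {d q : ℕ} {x y z : DL d q}
    (hm : ∀ j, DL.mm x z j ≤ DL.mm x y j) (hl : ∀ j, DL.ll x z j ≤ DL.ll x y j) :
    DL.dist x z ≤ DL.dist x y := by
  rw [DL.dist_eq_inf_sup, DL.dist_eq_inf_sup]
  refine le_ciInf fun σ => (ciInf_le (OrderBot.bddBelow _) σ).trans ?_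
  exact Finset.sup_mono_fun fun i _ => fST_mono hm hl σ i

lemma DL.succ_dist_le {d q : ℕ} (hd : 2 ≤ d) {x y z : DL d q} {i₀ : Fin d}
    (hm : ∀ j, DL.mm x y j ≤ DL.mm x z j) (hl : ∀ j, DL.ll x y j ≤ DL.ll x z j)
    (hmi : DL.mm x y i₀ + 1 ≤ DL.mm x z i₀) (hli : DL.ll x y i₀ + 1 ≤ DL.ll x z i₀) :
    DL.dist x y + 1 ≤ DL.dist x z := by
  rw [DL.dist_eq_inf_sup, DL.dist_eq_inf_sup]
  refine le_ciInf fun σ => ?_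
  have h2d : (2 : ℕ) ∈ Finset.Icc 2 d := Finset.mem_Icc.mpr ⟨le_refl 2, hd⟩
  have hs2 := fST_succ_le hm hl hmi hli σ 2
  have hpos : 0 < (Finset.Icc 2 d).sup (DL.fST (DL.mm x z) (DL.ll x z) σ) :=
    lt_of_lt_of_le (by omega) (Finset.le_sup h2d)
  have hlt : (Finset.Icc 2 d).sup (DL.fST (DL.mm x y) (DL.ll x y) σ)
      < (Finset.Icc 2 d).sup (DL.fST (DL.mm x z) (DL.ll x z) σ) := by
    rw [Finset.sup_lt_iff hpos]
    intro i hi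
    have := fST_succ_le hm hl hmi hli σ i
    exact lt_of_lt_of_le (by omega) (Finset.le_sup hi)
  have h0 : (⨅ σ' : Equiv.Perm (Fin d), (Finset.Icc 2 d).sup (DL.fST (DL.mm x y) (DL.ll x y) σ'))
      ≤ (Finset.Icc 2 d).sup (DL.fST (DL.mm x y) (DL.ll x y) σ) :=
    ciInf_le (OrderBot.bddBelow _) σ
  omega

namespace TreeVertex

@[simp] lemma o_m : (o q).m = 0 := rfl
@[simp] lemma o_w : (o q).w = ([] : List (Fin q)) := rfl
@[simp] lemma o_l : (o q).l = 0 := rfl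

lemma cpl_nil (w : List (Fin q)) : cpl w ([] : List (Fin q)) = 0 := by
  cases w <;> rfl

lemma mPair_o_right (v : TreeVertex q) : mPair v (o q) = v.l := by
  unfold mPair
  rw [o_m, o_w]
  split_ifs with h1 h2
  · omega
  · rfl
  · rw [cpl_nil]; omega

lemma mPair_o_left (v : TreeVertex q) : mPair (o q) v = v.m := by
  unfold mPair
  rw [o_m, o_w, o_l]
  split_ifs with h1 h2
  · omega
  · omega
  · have : v.m = 0 := by omega
    simp [this, cpl]

/-- the special tree vertex with `m = l = k`, all edge labels `1` -/
def zetaTV (q : ℕ) (hq : 2 ≤ q) (k : ℕ) : TreeVertex q :=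
  ⟨k, List.replicate k ⟨1, by omega⟩, by
    intro a t _ hw
    have ha : a ∈ List.replicate k (⟨1, by omega⟩ : Fin q) := by
      rw [hw]; exact List.mem_cons_self
    rw [List.eq_of_mem_replicate ha]
    simp⟩

variable (hq : 2 ≤ q) {k : ℕ}

@[simp] lemma zetaTV_m : (zetaTV q hq k).m = k := rfl
@[simp] lemma zetaTV_l : (zetaTV q hq k).l = k := by
  simp [zetaTV, l]

lemma mPair_zetaTV_le {v : TreeVertex q} (h : k ≤ v.m) :
    mPair v (zetaTV q hq k) ≤ v.l := by
  unfold mPair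
  rw [zetaTV_m]
  split_ifs <;> omega

lemma zetaTV_mPair_le {v : TreeVertex q} (h : k ≤ v.m) :
    mPair (zetaTV q hq k) v ≤ v.m := by
  unfold mPair
  rw [zetaTV_m, zetaTV_l]
  split_ifs <;> omega

lemma le_mPair_zetaTV {v : TreeVertex q} (h : v.m < k) :
    v.l + 1 ≤ mPair v (zetaTV q hq k) := by
  unfold mPair
  rw [zetaTV_m]
  split_ifs <;> omega

lemma le_zetaTV_mPair {v : TreeVertex q} (h : v.m < k) :
    v.m + 1 ≤ mPair (zetaTV q hq k) v := by
  unfold mPair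
  rw [zetaTV_m, zetaTV_l]
  split_ifs <;> omega

end TreeVertex

/-- the point `ζ^i_k` of `DL_d(q)` -/
def DLzeta {d q : ℕ} (hq : 2 ≤ q) (i : Fin d) (k : ℕ) : DL d q :=
  ⟨fun j => if j = i then TreeVertex.zetaTV q hq k else TreeVertex.o q, by
    apply Finset.sum_eq_zero
    intro j _
    by_cases hji : j = i <;> simp [hji, TreeVertex.h]⟩

lemma DL.dist_zeta_le {d q : ℕ} (hq : 2 ≤ q) {x : DL d q} {i : Fin d} {k : ℕ}
    (h : k ≤ DL.mc x i) :
    DL.dist x (DLzeta hq i k) ≤ DL.dist x (DL.id0 d q) := by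
  apply DL.dist_le_of_coord
  · intro j
    show TreeVertex.mPair (x.t j) ((DLzeta hq i k).t j)
      ≤ TreeVertex.mPair (x.t j) ((DL.id0 d q).t j)
    show TreeVertex.mPair (x.t j) (if j = i then TreeVertex.zetaTV q hq k else TreeVertex.o q)
      ≤ TreeVertex.mPair (x.t j) (TreeVertex.o q)
    rw [TreeVertex.mPair_o_right]
    by_cases hji : j = i
    · subst hji
      simp only [if_pos rfl]
      exact TreeVertex.mPair_zetaTV_le hq h
    · rw [if_neg hji, TreeVertex.mPair_o_right]
  · intro j
    show TreeVertex.mPair ((DLzeta hq i k).t j) (x.t j)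
      ≤ TreeVertex.mPair ((DL.id0 d q).t j) (x.t j)
    show TreeVertex.mPair (if j = i then TreeVertex.zetaTV q hq k else TreeVertex.o q) (x.t j)
      ≤ TreeVertex.mPair (TreeVertex.o q) (x.t j)
    rw [TreeVertex.mPair_o_left]
    by_cases hji : j = i
    · subst hji
      simp only [if_pos rfl]
      exact TreeVertex.zetaTV_mPair_le hq h
    · rw [if_neg hji, TreeVertex.mPair_o_left]

lemma DL.succ_dist_zeta {d q : ℕ} (hd : 2 ≤ d) (hq : 2 ≤ q) {x : DL d q} {i : Fin d} {k : ℕ}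
    (h : DL.mc x i < k) :
    DL.dist x (DL.id0 d q) + 1 ≤ DL.dist x (DLzeta hq i k) := by
  have hmm : ∀ j, DL.mm x (DL.id0 d q) j = (x.t j).l := fun j =>
    TreeVertex.mPair_o_right (x.t j)
  have hll : ∀ j, DL.ll x (DL.id0 d q) j = (x.t j).m := fun j =>
    TreeVertex.mPair_o_left (x.t j)
  have hzt : ∀ j, (DLzeta hq i k).t j
      = if j = i then TreeVertex.zetaTV q hq k else TreeVertex.o q := fun j => rfl
  refine DL.succ_dist_le hd (i₀ := i) ?_ ?_ ?_ ?_
  · intro j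
    rw [hmm]
    show (x.t j).l ≤ TreeVertex.mPair (x.t j) ((DLzeta hq i k).t j)
    rw [hzt]
    by_cases hji : j = i
    · subst hji
      rw [if_pos rfl]
      have := TreeVertex.le_mPair_zetaTV hq (v := x.t j) h
      omega
    · rw [if_neg hji, TreeVertex.mPair_o_right]
  · intro j
    rw [hll]
    show (x.t j).m ≤ TreeVertex.mPair ((DLzeta hq i k).t j) (x.t j)
    rw [hzt]
    by_cases hji : j = i
    · subst hji
      rw [if_pos rfl]
      have := TreeVertex.le_zetaTV_mPair hq (v := x.t j) h
      omega
    · rw [if_neg hji, TreeVertex.mPair_o_left]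
  · rw [hmm]
    show (x.t i).l + 1 ≤ TreeVertex.mPair (x.t i) ((DLzeta hq i k).t i)
    rw [hzt, if_pos rfl]
    exact TreeVertex.le_mPair_zetaTV hq h
  · rw [hll]
    show (x.t i).m + 1 ≤ TreeVertex.mPair ((DLzeta hq i k).t i) (x.t i)
    rw [hzt, if_pos rfl]
    exact TreeVertex.le_zetaTV_mPair hq h

end Aux

/-- Let `(x n)` be a sequence in `DL_d(q)` whose associated
functions `z ↦ d(x n, z) - d(x n, id)` converge pointwise to a horofunction `h`
(a limit not realized by any point of the graph).  Then for each
`i ∈ {1,…,d}`, the limit `lim_n m_i(x n)` exists in `ℤ_{≥0} ∪ {∞} = ℕ∞`. -/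
theorem mcoord_limit_exists {d q : ℕ} (hd : 2 ≤ d) (hq : 2 ≤ q)
    (x : ℕ → DL d q) (h : DL d q → ℤ)
    (hconv : ∀ z, Tendsto (fun n => (DL.dist (x n) z : ℤ) - (DL.dist (x n) (DL.id0 d q) : ℤ))
      atTop (nhds (h z)))
    (hhoro : ∀ v : DL d q, h ≠ fun z => (DL.dist v z : ℤ) - (DL.dist v (DL.id0 d q) : ℤ)) :
    ∀ i : Fin d, ∃ L : ℕ∞,
      Tendsto (fun n => (DL.mc (x n) i : ℕ∞)) atTop (nhds L) := by
  intro i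
  have hev : ∀ k : ℕ, ∀ᶠ n in atTop,
      (DL.dist (x n) (DLzeta hq i k) : ℤ) - (DL.dist (x n) (DL.id0 d q) : ℤ)
        = h (DLzeta hq i k) := by
    intro k
    have ht := hconv (DLzeta hq i k)
    rw [show (nhds (h (DLzeta hq i k))) = pure (h (DLzeta hq i k)) from
      congrFun (nhds_discrete ℤ) _] at ht
    exact tendsto_pure.mp ht
  have keyle : ∀ k : ℕ, h (DLzeta hq i k) ≤ 0 → ∀ᶠ n in atTop, k ≤ DL.mc (x n) i := by
    intro k hk
    filter_upwards [hev k] with n hn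
    by_contra hlt
    push_neg at hlt
    have := DL.succ_dist_zeta hd hq hlt
    omega
  have keylt : ∀ k : ℕ, 0 < h (DLzeta hq i k) → ∀ᶠ n in atTop, DL.mc (x n) i < k := by
    intro k hk
    filter_upwards [hev k] with n hn
    by_contra hle
    push_neg at hle
    have := DL.dist_zeta_le hq hle
    omega
  by_cases hall : ∀ k : ℕ, h (DLzeta hq i k) ≤ 0
  · refine ⟨⊤, ?_⟩
    rw [ENat.tendsto_nhds_top_iff_natCast_lt]
    intro k
    filter_upwards [keyle (k + 1) (hall _)] with n hn
    exact_mod_cast Nat.lt_of_succ_le hn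
  · push_neg at hall
    have hk0 : 0 < h (DLzeta hq i (Nat.find hall)) := Nat.find_spec hall
    have hne : Nat.find hall ≠ 0 := by
      intro h0
      obtain ⟨n, hn⟩ := (keylt _ hk0).exists
      omega
    have hKle : h (DLzeta hq i (Nat.find hall - 1)) ≤ 0 :=
      le_of_not_gt (Nat.find_min hall (by omega))
    refine ⟨((Nat.find hall - 1 : ℕ) : ℕ∞), ?_⟩
    have hev2 : ∀ᶠ n in atTop,
        ((Nat.find hall - 1 : ℕ) : ℕ∞) = (DL.mc (x n) i : ℕ∞) := by
      filter_upwards [keyle _ hKle, keylt _ hk0] with n h1 h2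
      congr 1
      omega
    exact Tendsto.congr' hev2 tendsto_const_nhds
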